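/- Let (M,d) be a metric space, X ⊆ M a subset, σ ⊆ X a nonempty finite subset with diam(σ) = r, and V ⊆ X̄(σ) a subset containing a point y with d(y,x) ≤ r for all x ∈ σ (i.e. y ∈ X(σ) ∩ V). Then every y' ∈ V satisfies d(y, y') ≤ 2r. Consequently, the Vietoris–Rips complex R(V; 2r) is a cone with apex y: for every nonempty finite τ ⊆ V with τ ∈ R(V; 2r), also τ ∪ {y} ∈ R(V; 2r). -/

import Mathlib

/-- The Vietoris–Rips complex of a subset `X` at scale `r`. -/
def VRips {M : Type*} [PseudoMetricSpace M] (X : Set M) (r : ℝ) : Set (Finset M) :=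
  {σ | σ.Nonempty ∧ ↑σ ⊆ X ∧ ∀ x ∈ σ, ∀ y ∈ σ, dist x y ≤ r}

/-- The witness set `X(S)` of a finite set `S`. -/
def witnessSet {M : Type*} [MetricSpace M] (X : Set M) (S : Finset M) : Set M :=
  {y ∈ X | ∀ x ∈ S, dist y x ≤ Metric.diam (S : Set M)}

/-- `X̄(σ)`: the union of the witness sets of all nonempty subsets of `σ`. -/
def witnessUnion {M : Type*} [MetricSpace M] (X : Set M) (σ : Finset M) : Set M :=
  ⋃ S ∈ {S : Finset M | S.Nonempty ∧ S ⊆ σ}, witnessSet X S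

/-!
A point `y'` of `X̄(σ)` witnesses some nonempty `S ⊆ σ`, so it lies within `diam S ≤ diam σ = r`
of some `x ∈ σ`; as `y` is within `r` of that same `x`, the triangle inequality gives
`d(y, y') ≤ 2r`. Adding to a simplex of `R(V; 2r)` a point of `V` within `2r` of all its
vertices yields again a simplex.
-/

section VietorisRips

variable {M : Type*} [PseudoMetricSpace M] [DecidableEq M]

theorem insert_mem_VRips {V : Set M} {r : ℝ} {τ : Finset M} {y : M} (hτ : τ ∈ VRips V r)
    (hyV : y ∈ V) (hy : ∀ z ∈ τ, dist y z ≤ r) : insert y τ ∈ VRips V r := by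
  obtain ⟨⟨z, hz⟩, hτV, hτr⟩ := hτ
  have hr : 0 ≤ r := dist_self z ▸ hτr z hz z hz
  refine ⟨Finset.insert_nonempty y τ, ?_, ?_⟩
  · rw [Finset.coe_insert]
    exact Set.insert_subset hyV hτV
  · intro a ha b hb
    rcases Finset.mem_insert.mp ha with rfl | ha <;> rcases Finset.mem_insert.mp hb with hb | hb
    · simpa [hb] using hr
    · exact hy b hb
    · rw [hb, dist_comm]
      exact hy a ha
    · exact hτr a ha b hb

end VietorisRips

section Witness

variable {M : Type*} [MetricSpace M]

theorem exists_dist_le_diam_of_mem_witnessUnion {X : Set M} {σ : Finset M} {y' : M}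
    (hy' : y' ∈ witnessUnion X σ) : ∃ x ∈ σ, dist y' x ≤ Metric.diam (σ : Set M) := by
  simp only [witnessUnion, witnessSet, Set.mem_iUnion, Set.mem_ofPred_eq] at hy'
  obtain ⟨S, ⟨⟨x, hxS⟩, hSσ⟩, -, hy'S⟩ := hy'
  have hdiam : Metric.diam (S : Set M) ≤ Metric.diam (σ : Set M) :=
    Metric.diam_mono (Finset.coe_subset.mpr hSσ) σ.finite_toSet.isBounded
  exact ⟨x, hSσ hxS, (hy'S x hxS).trans hdiam⟩

theorem dist_le_two_mul_of_mem_witnessUnion {X : Set M} {σ : Finset M} {r : ℝ}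
    (hdiam : Metric.diam (σ : Set M) = r) {y y' : M} (hy : ∀ x ∈ σ, dist y x ≤ r)
    (hy' : y' ∈ witnessUnion X σ) : dist y y' ≤ 2 * r := by
  obtain ⟨x, hxσ, hy'x⟩ := exists_dist_le_diam_of_mem_witnessUnion hy'
  calc dist y y' ≤ dist y x + dist y' x := dist_triangle_right y y' x
    _ ≤ r + r := add_le_add (hy x hxσ) (hdiam ▸ hy'x)
    _ = 2 * r := (two_mul r).symm

end Witness

theorem witnessUnion_restricted_cone_general {M : Type*} [MetricSpace M] [DecidableEq M] (X : Set M) (σ : Finset M)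
    (r : ℝ) (hdiam : Metric.diam (σ : Set M) = r)
    (V : Set M) (hV : V ⊆ witnessUnion X σ)
    (y : M) (hyV : y ∈ V) (hy : ∀ x ∈ σ, dist y x ≤ r) :
    (∀ y' ∈ V, dist y y' ≤ 2 * r) ∧
    ∀ τ : Finset M, τ.Nonempty → ↑τ ⊆ V → τ ∈ VRips V (2 * r) →
      insert y τ ∈ VRips V (2 * r) := by
  have hcone : ∀ y' ∈ V, dist y y' ≤ 2 * r := fun y' hy'V =>
    dist_le_two_mul_of_mem_witnessUnion hdiam hy (hV hy'V)
  exact ⟨hcone, fun τ _ hτV hτ => insert_mem_VRips hτ hyV fun z hz => hcone z (hτV hz)⟩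

/-- If `V ⊆ X̄(σ)` contains a point `y` within distance `r = diam σ` of every point of `σ`,
then every point of `V` is within `2r` of `y`; hence `R(V; 2r)` is a cone with apex `y`. -/
theorem witnessUnion_restricted_cone {M : Type*} [MetricSpace M] [DecidableEq M] (X : Set M) (σ : Finset M)
    (hσ : σ.Nonempty) (hσX : ↑σ ⊆ X) (r : ℝ) (hdiam : Metric.diam (σ : Set M) = r)
    (V : Set M) (hV : V ⊆ witnessUnion X σ)
    (y : M) (hyV : y ∈ V) (hy : ∀ x ∈ σ, dist y x ≤ r) :
    (∀ y' ∈ V, dist y y' ≤ 2 * r) ∧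
    ∀ τ : Finset M, τ.Nonempty → ↑τ ⊆ V → τ ∈ VRips V (2 * r) →
      insert y τ ∈ VRips V (2 * r) :=
  witnessUnion_restricted_cone_general X σ r hdiam V hV y hyV hy
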